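/- Let k ≥ 2 be an integer and let x₀, x₁, x₂ be i.i.d. random variables uniformly distributed on {1, 2, ..., k}. Then E(|x₁ - x₀| · |x₂ - x₁|) = (k - 1)(k + 1)(7k² - 8)/(60k²). -/

import Mathlib

open MeasureTheory ProbabilityTheory
open scoped ENNReal

/-- The uniform probability measure on the integers `{1, ..., k}` (as a measure on `ℕ`). -/
noncomputable def unifMeasure (k : ℕ) : Measure ℕ :=
  (k : ℝ≥0∞)⁻¹ • ∑ i ∈ Finset.Icc 1 k, Measure.dirac i

/-! Conditioning on the middle letter `x₁ = b` makes the two factors independent, so the moment is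
`E[m(x₁)²]` with `m(b) = E|b - x₀| = (b² - (k + 1) b + (k² + k) / 2) / k`. Summing this squared
quadratic over `b ∈ {1, ..., k}` with the power sums `∑ b^j`, `j ≤ 4`, gives the closed form. -/

open Finset

namespace ProbabilityTheory

variable {Ω β : Type*} [MeasurableSpace Ω] {μ : Measure Ω} [MeasurableSpace β]

theorem iIndepFun.integral_mul_eq_integral_mul_integral_of_middle [IsFiniteMeasure μ]
    {x : Fin 3 → Ω → β} (hmeas : ∀ i, Measurable (x i)) (hindep : iIndepFun x μ)
    {f g : β → β → ℝ} (hf : Measurable (Function.uncurry f))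
    (hg : Measurable (Function.uncurry g))
    (hint : Integrable (fun ω ↦ f (x 1 ω) (x 0 ω) * g (x 1 ω) (x 2 ω)) μ) :
    ∫ ω, f (x 1 ω) (x 0 ω) * g (x 1 ω) (x 2 ω) ∂μ
      = ∫ b, (∫ ω, f b (x 0 ω) ∂μ) * (∫ ω, g b (x 2 ω) ∂μ) ∂(μ.map (x 1)) := by
  set W : Ω → β × β := fun ω ↦ (x 0 ω, x 2 ω)
  have hW : Measurable W := (hmeas 0).prodMk (hmeas 2)
  have hYW : Measurable fun ω ↦ (x 1 ω, W ω) := (hmeas 1).prodMk hW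
  have hlaw : μ.map (fun ω ↦ (x 1 ω, W ω)) = (μ.map (x 1)).prod (μ.map W) :=
    (indepFun_iff_map_prod_eq_prod_map_map (hmeas 1).aemeasurable hW.aemeasurable).1
      (hindep.indepFun_prodMk hmeas 0 2 1 (by decide) (by decide)).symm
  set F : β × (β × β) → ℝ := fun p ↦ f p.1 p.2.1 * g p.1 p.2.2
  have hF : Measurable F :=
    (hf.comp (measurable_fst.prodMk (measurable_fst.comp measurable_snd))).mul
      (hg.comp (measurable_fst.prodMk (measurable_snd.comp measurable_snd)))
  have hFint : Integrable F ((μ.map (x 1)).prod (μ.map W)) := by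
    rw [← hlaw]
    exact (integrable_map_measure hF.aestronglyMeasurable hYW.aemeasurable).2 hint
  calc ∫ ω, f (x 1 ω) (x 0 ω) * g (x 1 ω) (x 2 ω) ∂μ
      = ∫ p, F p ∂((μ.map (x 1)).prod (μ.map W)) := by
        rw [← hlaw, integral_map hYW.aemeasurable hF.aestronglyMeasurable]
    _ = ∫ b, ∫ q, F (b, q) ∂(μ.map W) ∂(μ.map (x 1)) := integral_prod F hFint
    _ = _ := by
        refine integral_congr_ae (ae_of_all _ fun b ↦ ?_)
        have hfb : Measurable (f b) := hf.comp measurable_prodMk_left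
        have hgb : Measurable (g b) := hg.comp measurable_prodMk_left
        beta_reduce
        rw [integral_map (f := fun q ↦ F (b, q)) hW.aemeasurable
          (hF.comp measurable_prodMk_left).aestronglyMeasurable]
        exact ((hindep.indepFun (by decide : (0 : Fin 3) ≠ 2)).comp hfb hgb
          ).integral_fun_mul_eq_mul_integral
            (hfb.comp (hmeas 0)).aestronglyMeasurable (hgb.comp (hmeas 2)).aestronglyMeasurable

end ProbabilityTheory

theorem integral_unifMeasure (k : ℕ) (f : ℕ → ℝ) :
    ∫ a, f a ∂unifMeasure k = (∑ a ∈ Icc 1 k, f a) / k := by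
  rw [unifMeasure, integral_smul_measure,
    integral_finsetSum_measure fun a _ ↦ integrable_dirac (by simp)]
  simp [integral_dirac, div_eq_inv_mul]

theorem ae_mem_Icc_unifMeasure (k : ℕ) : ∀ᵐ a ∂unifMeasure k, a ∈ Icc 1 k := by
  simp [unifMeasure, ae_iff]

theorem sum_Icc_id (n : ℕ) : ∑ a ∈ Icc 1 n, (a : ℝ) = n * (n + 1) / 2 := by
  induction n with
  | zero => simp
  | succ n ih =>
    rw [sum_Icc_succ_top (by omega), ih]
    push_cast; ring

theorem sum_Icc_abs_sub {b k : ℕ} (hbk : b ≤ k) :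
    ∑ a ∈ Icc 1 k, |(b : ℝ) - a| = b ^ 2 - (k + 1) * b + (k ^ 2 + k) / 2 := by
  induction k, hbk using Nat.le_induction with
  | base =>
    have hsub : ∀ a ∈ Icc 1 b, |(b : ℝ) - a| = b - a := fun a ha ↦
      abs_of_nonneg (sub_nonneg.2 (by exact_mod_cast (mem_Icc.1 ha).2))
    rw [sum_congr rfl hsub, sum_sub_distrib, sum_Icc_id, sum_const, Nat.card_Icc, nsmul_eq_mul]
    push_cast; ring
  | succ k hbk ih =>
    rw [sum_Icc_succ_top (by omega), ih, abs_sub_comm,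
      abs_of_nonneg (sub_nonneg.2 (by exact_mod_cast hbk.trans k.le_succ))]
    push_cast; ring

theorem sum_Icc_sq_quadratic (n : ℕ) (c d : ℝ) :
    ∑ b ∈ Icc 1 n, ((b : ℝ) ^ 2 - c * b + d) ^ 2
      = n * (n + 1) * (2 * n + 1) * (3 * n ^ 2 + 3 * n - 1) / 30 - 2 * c * (n * (n + 1) / 2) ^ 2
        + (c ^ 2 + 2 * d) * (n * (n + 1) * (2 * n + 1) / 6) - 2 * c * d * (n * (n + 1) / 2)
        + d ^ 2 * n := by
  induction n with
  | zero => simp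
  | succ n ih =>
    rw [sum_Icc_succ_top (by omega), ih]
    push_cast; ring

section UniformLetter

variable {Ω : Type*} [MeasurableSpace Ω] {μ : Measure Ω} {k : ℕ} {X : Ω → ℕ}

theorem ae_mem_Icc_of_map_eq_unifMeasure (hX : Measurable X) (hlaw : μ.map X = unifMeasure k) :
    ∀ᵐ ω ∂μ, X ω ∈ Icc 1 k :=
  ae_of_ae_map hX.aemeasurable (hlaw ▸ ae_mem_Icc_unifMeasure k)

theorem integral_abs_sub_of_map_eq_unifMeasure (hX : Measurable X)
    (hlaw : μ.map X = unifMeasure k) {b : ℕ} (hb : b ≤ k) :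
    ∫ ω, |(b : ℝ) - X ω| ∂μ = (b ^ 2 - (k + 1) * b + (k ^ 2 + k) / 2) / k := by
  rw [← integral_map (f := fun a : ℕ ↦ |(b : ℝ) - a|) hX.aemeasurable
    (measurable_of_countable _).aestronglyMeasurable, hlaw, integral_unifMeasure,
    sum_Icc_abs_sub hb]

end UniformLetter

theorem cross_moment_T011_uniform
    {Ω : Type*} [MeasurableSpace Ω] (μ : Measure Ω) [IsProbabilityMeasure μ]
    (k : ℕ) (hk : 2 ≤ k) (x : Fin 3 → Ω → ℕ)
    (hmeas : ∀ i, Measurable (x i))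
    (hdist : ∀ i, Measure.map (x i) μ = unifMeasure k)
    (hindep : iIndepFun x μ) :
    ∫ ω, |(x 1 ω : ℝ) - (x 0 ω : ℝ)| * |(x 2 ω : ℝ) - (x 1 ω : ℝ)| ∂μ
      = ((k : ℝ) - 1) * ((k : ℝ) + 1) * (7 * (k : ℝ) ^ 2 - 8) / (60 * (k : ℝ) ^ 2) := by
  have hk0 : (k : ℝ) ≠ 0 := by exact_mod_cast (by omega : k ≠ 0)
  have hsupp (i : Fin 3) := ae_mem_Icc_of_map_eq_unifMeasure (hmeas i) (hdist i)
  have habs_sub_le {a b : ℕ} (ha : a ∈ Icc 1 k) (hb : b ∈ Icc 1 k) : |(a : ℝ) - b| ≤ k := by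
    rw [mem_Icc] at ha hb
    exact abs_sub_le_of_nonneg_of_le (by positivity) (by exact_mod_cast ha.2) (by positivity)
      (by exact_mod_cast hb.2)
  have hint : Integrable (fun ω ↦ |(x 1 ω : ℝ) - x 0 ω| * |(x 2 ω : ℝ) - x 1 ω|) μ := by
    refine Integrable.of_bound (by fun_prop) (k * k) ?_
    filter_upwards [hsupp 0, hsupp 1, hsupp 2] with ω h0 h1 h2
    rw [Real.norm_eq_abs, abs_mul, abs_abs, abs_abs]
    exact mul_le_mul (habs_sub_le h1 h0) (habs_sub_le h2 h1) (abs_nonneg _) (by positivity)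
  calc ∫ ω, |(x 1 ω : ℝ) - (x 0 ω : ℝ)| * |(x 2 ω : ℝ) - (x 1 ω : ℝ)| ∂μ
      = ∫ b, (∫ ω, |(b : ℝ) - x 0 ω| ∂μ) * (∫ ω, |(x 2 ω : ℝ) - b| ∂μ) ∂(μ.map (x 1)) :=
        hindep.integral_mul_eq_integral_mul_integral_of_middle hmeas
          (f := fun b a ↦ |(b : ℝ) - a|) (g := fun b c ↦ |(c : ℝ) - b|)
          (measurable_of_countable _) (measurable_of_countable _) hint
    _ = ∫ b, ((b : ℝ) ^ 2 - (k + 1) * b + (k ^ 2 + k) / 2) ^ 2 / k ^ 2 ∂unifMeasure k := by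
        rw [hdist 1]
        refine integral_congr_ae ((ae_mem_Icc_unifMeasure k).mono fun b hb ↦ ?_)
        simp_rw [abs_sub_comm _ (b : ℝ)]
        rw [integral_abs_sub_of_map_eq_unifMeasure (hmeas 0) (hdist 0) (mem_Icc.1 hb).2,
          integral_abs_sub_of_map_eq_unifMeasure (hmeas 2) (hdist 2) (mem_Icc.1 hb).2]
        ring
    _ = _ := by
        rw [integral_unifMeasure, ← sum_div, sum_Icc_sq_quadratic]
        field_simp
        ring
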